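/- arXiv:1202.1041 — 3 statements merged into one kernel-verified Lean document; each statement's English description precedes it below -/
import Mathlib

section
/- Let C and D be two cliques in a graph G, and let T be a triangle packing. Suppose α, β ∈ C and {α, β, p} and {γ, q, r} are triangles of T with γ ∈ C and p, q, r ∈ D. Then replacing these two triangles by {α, β, γ} and {p, q, r} yields a triangle packing of the same cardinality in which α, β, γ are covered only by triangles contained in C ∪ {p,q,r}, and in particular the new family consists of pairwise vertex-disjoint triangles of G. -/
def IsTriangle {V : Type*} (G : SimpleGraph V) (t : Finset V) : Prop :=
  t.card = 3 ∧ ∀ x ∈ t, ∀ y ∈ t, x ≠ y → G.Adj x y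

def IsTrianglePacking {V : Type*} (G : SimpleGraph V) (T : Finset (Finset V)) : Prop :=
  (∀ t ∈ T, IsTriangle G t) ∧ (T : Set (Finset V)).Pairwise Disjoint

theorem card3_ne {V : Type*} [DecidableEq V] {α β γ : V} (h : ({α, β, γ} : Finset V).card = 3) :
    α ≠ β ∧ α ≠ γ ∧ β ≠ γ := by
  refine ⟨?_, ?_, ?_⟩ <;> rintro rfl <;> simp at h
  · have := Finset.card_insert_le α ({γ}:Finset V); simp at this; omega
  · have := Finset.card_insert_le β ({α}:Finset V); simp at this; omega
  · have := Finset.card_insert_le α ({β}:Finset V); simp at this; omega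

theorem swap_two_triangles {V : Type*} [DecidableEq V]
    (G : SimpleGraph V) (C D : Finset V)
    (hC : G.IsClique (C : Set V)) (hD : G.IsClique (D : Set V))
    (T : Finset (Finset V)) (hT : IsTrianglePacking G T)
    (α β γ p q r : V)
    (hαC : α ∈ C) (hβC : β ∈ C) (hγC : γ ∈ C)
    (hpD : p ∈ D) (hqD : q ∈ D) (hrD : r ∈ D)
    (habc : ({α, β, γ} : Finset V).card = 3)
    (hpqr : ({p, q, r} : Finset V).card = 3)
    (ht1 : ({α, β, p} : Finset V) ∈ T) (ht2 : ({γ, q, r} : Finset V) ∈ T)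
    (hother : ∀ t ∈ T, t ≠ ({α, β, p} : Finset V) → t ≠ ({γ, q, r} : Finset V) →
      ∀ x ∈ t, x ∉ ({α, β, γ, p, q, r} : Finset V)) :
    IsTrianglePacking G
      (((T \ {({α, β, p} : Finset V), ({γ, q, r} : Finset V)}) ∪
        {({α, β, γ} : Finset V), ({p, q, r} : Finset V)})) ∧
    ((T \ {({α, β, p} : Finset V), ({γ, q, r} : Finset V)}) ∪
        {({α, β, γ} : Finset V), ({p, q, r} : Finset V)}).card = T.card ∧
    (∀ t ∈ (T \ {({α, β, p} : Finset V), ({γ, q, r} : Finset V)}) ∪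
        {({α, β, γ} : Finset V), ({p, q, r} : Finset V)},
      (α ∈ t ∨ β ∈ t ∨ γ ∈ t) → (t : Set V) ⊆ (C : Set V) ∪ {p, q, r}) := by
  obtain ⟨hTtri, hTdisj⟩ := hT
  obtain ⟨hαβ, hαγ, hβγ⟩ := card3_ne habc
  obtain ⟨hpq, hpr, hqr⟩ := card3_ne hpqr
  obtain ⟨-, hαp, hβp⟩ := card3_ne (hTtri _ ht1).1
  obtain ⟨hγq, hγr, -⟩ := card3_ne (hTtri _ ht2).1
  have hAtri : IsTriangle G ({α, β, γ} : Finset V) := by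
    refine ⟨habc, fun x hx y hy hxy => hC ?_ ?_ hxy⟩ <;>
      · simp only [Finset.mem_insert, Finset.mem_singleton] at hx hy
        first
        | (rcases hx with rfl|rfl|rfl <;> simpa)
        | (rcases hy with rfl|rfl|rfl <;> simpa)
  have hBtri : IsTriangle G ({p, q, r} : Finset V) := by
    refine ⟨hpqr, fun x hx y hy hxy => hD ?_ ?_ hxy⟩ <;>
      · simp only [Finset.mem_insert, Finset.mem_singleton] at hx hy
        first
        | (rcases hx with rfl|rfl|rfl <;> simpa)
        | (rcases hy with rfl|rfl|rfl <;> simpa)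
  by_cases h12 : ({α, β, p} : Finset V) = ({γ, q, r} : Finset V)
  · -- degenerate case: the two old triangles coincide
    have hγp : γ = p := by
      have hγ : γ ∈ ({α, β, p} : Finset V) := by rw [h12]; simp
      simp only [Finset.mem_insert, Finset.mem_singleton] at hγ
      rcases hγ with h|h|h
      · exact absurd h.symm hαγ
      · exact absurd h.symm hβγ
      · exact h
    have hB1 : ({p, q, r} : Finset V) = ({α, β, p} : Finset V) :=
      (by rw [hγp] : ({p, q, r} : Finset V) = ({γ, q, r} : Finset V)).trans h12.symm
    have hA1 : ({α, β, γ} : Finset V) = ({α, β, p} : Finset V) := by rw [hγp]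
    have e1 : ({({α, β, γ} : Finset V), ({p, q, r} : Finset V)} : Finset (Finset V))
        = {({α, β, p} : Finset V)} := by rw [hA1, hB1]; simp
    have e2 : ({({α, β, p} : Finset V), ({γ, q, r} : Finset V)} : Finset (Finset V))
        = {({α, β, p} : Finset V)} := by rw [← h12]; simp
    rw [e1, e2, Finset.sdiff_union_of_subset (Finset.singleton_subset_iff.mpr ht1)]
    refine ⟨⟨hTtri, hTdisj⟩, rfl, ?_⟩
    intro t ht hmem
    by_cases hteq : t = ({α, β, p} : Finset V)
    · subst hteq
      intro x hx
      simp only [Finset.coe_insert, Set.mem_insert_iff, Finset.coe_singleton,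
        Set.mem_singleton_iff] at hx
      rcases hx with rfl|rfl|rfl
      · exact Or.inl hαC
      · exact Or.inl hβC
      · exact Or.inr (by simp)
    · exfalso
      have hne2 : t ≠ ({γ, q, r} : Finset V) := by rw [← h12]; exact hteq
      rcases hmem with hm|hm|hm <;> exact hother t ht hteq hne2 _ hm (by simp)
  · have hdisj12 : Disjoint ({α, β, p} : Finset V) ({γ, q, r} : Finset V) :=
      hTdisj (Finset.mem_coe.mpr ht1) (Finset.mem_coe.mpr ht2) h12
    have hnmem := Finset.disjoint_left.mp hdisj12
    have hαt2 : α ∉ ({γ, q, r} : Finset V) := hnmem (by simp)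
    have hβt2 : β ∉ ({γ, q, r} : Finset V) := hnmem (by simp)
    have hpt2 : p ∉ ({γ, q, r} : Finset V) := hnmem (by simp)
    simp only [Finset.mem_insert, Finset.mem_singleton, not_or] at hαt2 hβt2 hpt2
    have hABdisj : Disjoint ({α, β, γ} : Finset V) ({p, q, r} : Finset V) := by
      rw [Finset.disjoint_left]
      intro x hx hx'
      simp only [Finset.mem_insert, Finset.mem_singleton] at hx hx'
      rcases hx with rfl|rfl|rfl <;> rcases hx' with rfl|rfl|rfl <;>
        simp_all
    have hold : ∀ t, t ∈ T → t ≠ ({α, β, p} : Finset V) → t ≠ ({γ, q, r} : Finset V) →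
        Disjoint t ({α, β, γ} : Finset V) ∧ Disjoint t ({p, q, r} : Finset V) := by
      intro t ht h1 h2
      have H := hother t ht h1 h2
      constructor <;>
        · rw [Finset.disjoint_left]
          intro x hx hx'
          refine H x hx ?_
          simp only [Finset.mem_insert, Finset.mem_singleton] at hx'
          rcases hx' with rfl|rfl|rfl <;> simp
    have hAnotin : ({α, β, γ} : Finset V) ∉ T \ {({α, β, p} : Finset V), ({γ, q, r} : Finset V)} := by
      intro h
      simp only [Finset.mem_sdiff, Finset.mem_insert, Finset.mem_singleton, not_or] at h
      exact hother _ h.1 h.2.1 h.2.2 α (by simp) (by simp)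
    have hBnotin : ({p, q, r} : Finset V) ∉ T \ {({α, β, p} : Finset V), ({γ, q, r} : Finset V)} := by
      intro h
      simp only [Finset.mem_sdiff, Finset.mem_insert, Finset.mem_singleton, not_or] at h
      exact hother _ h.1 h.2.1 h.2.2 p (by simp) (by simp)
    have hAB : ({α, β, γ} : Finset V) ≠ ({p, q, r} : Finset V) := by
      intro h
      have : α ∈ ({p, q, r} : Finset V) := by rw [← h]; simp
      simp only [Finset.mem_insert, Finset.mem_singleton] at this
      rcases this with rfl|rfl|rfl <;> simp_all
    refine ⟨⟨?_, ?_⟩, ?_, ?_⟩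
    · intro t ht
      rcases Finset.mem_union.mp ht with h | h
      · exact hTtri _ (Finset.mem_sdiff.mp h).1
      · simp only [Finset.mem_insert, Finset.mem_singleton] at h
        rcases h with rfl | rfl
        · exact hAtri
        · exact hBtri
    · intro s hs t ht hst
      simp only [Finset.coe_union, Set.mem_union, Finset.mem_coe, Finset.mem_sdiff,
        Finset.mem_insert, Finset.mem_singleton, Finset.coe_insert, Set.mem_insert_iff,
        Finset.coe_singleton, Set.mem_singleton_iff, not_or] at hs ht
      rcases hs with ⟨hsT, hs1, hs2⟩ | rfl | rfl <;>
        rcases ht with ⟨htT, ht1', ht2'⟩ | rfl | rfl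
      · exact hTdisj (Finset.mem_coe.mpr hsT) (Finset.mem_coe.mpr htT) hst
      · exact (hold _ hsT hs1 hs2).1
      · exact (hold _ hsT hs1 hs2).2
      · exact ((hold _ htT ht1' ht2').1).symm
      · exact absurd rfl hst
      · exact hABdisj
      · exact ((hold _ htT ht1' ht2').2).symm
      · exact hABdisj.symm
      · exact absurd rfl hst
    · have hsub : ({({α, β, p} : Finset V), ({γ, q, r} : Finset V)} : Finset (Finset V)) ⊆ T := by
        intro t ht
        simp only [Finset.mem_insert, Finset.mem_singleton] at ht
        rcases ht with rfl|rfl <;> assumption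
      have hc2 : ({({α, β, p} : Finset V), ({γ, q, r} : Finset V)} : Finset (Finset V)).card = 2 :=
        Finset.card_pair h12
      have hc2' : ({({α, β, γ} : Finset V), ({p, q, r} : Finset V)} : Finset (Finset V)).card = 2 :=
        Finset.card_pair hAB
      have hdun : Disjoint (T \ {({α, β, p} : Finset V), ({γ, q, r} : Finset V)})
          ({({α, β, γ} : Finset V), ({p, q, r} : Finset V)} : Finset (Finset V)) := by
        rw [Finset.disjoint_right]
        intro t ht
        simp only [Finset.mem_insert, Finset.mem_singleton] at ht
        rcases ht with rfl|rfl
        · exact hAnotin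
        · exact hBnotin
      rw [Finset.card_union_of_disjoint hdun, Finset.card_sdiff_of_subset hsub, hc2, hc2']
      have := Finset.card_le_card hsub
      rw [hc2] at this
      omega
    · intro t ht hmem
      rcases Finset.mem_union.mp ht with h | h
      · simp only [Finset.mem_sdiff, Finset.mem_insert, Finset.mem_singleton, not_or] at h
        exfalso
        rcases hmem with hm|hm|hm <;> exact hother _ h.1 h.2.1 h.2.2 _ hm (by simp)
      · simp only [Finset.mem_insert, Finset.mem_singleton] at h
        rcases h with rfl | rfl
        · intro x hx
          simp only [Finset.coe_insert, Set.mem_insert_iff, Finset.coe_singleton,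
            Set.mem_singleton_iff] at hx
          left
          rcases hx with rfl|rfl|rfl <;> simpa
        · intro x hx
          right
          simpa using hx
end

section
/- Let C be a clique of a graph G and D a clique of G, and let T be a triangle packing containing three triangles {α,p,q}, {β,r,s}, {γ,u,v} where α,β,γ ∈ C are distinct and p,q,r,s,u,v ∈ D are distinct. Then replacing these three triangles by {α,β,γ}, {p,q,r}, {s,u,v} yields a triangle packing of G of the same cardinality. -/
set_option maxHeartbeats 1000000 in
theorem swap_three_triangles {V : Type*} [DecidableEq V]
    (G : SimpleGraph V) (C D : Finset V)
    (hC : G.IsClique (C : Set V)) (hD : G.IsClique (D : Set V))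
    (T : Finset (Finset V)) (hT : IsTrianglePacking G T)
    (α β γ p q r s u v : V)
    (hαC : α ∈ C) (hβC : β ∈ C) (hγC : γ ∈ C)
    (hpD : p ∈ D) (hqD : q ∈ D) (hrD : r ∈ D)
    (hsD : s ∈ D) (huD : u ∈ D) (hvD : v ∈ D)
    (hdist : ({α, β, γ, p, q, r, s, u, v} : Finset V).card = 9)
    (ht1 : ({α, p, q} : Finset V) ∈ T)
    (ht2 : ({β, r, s} : Finset V) ∈ T)
    (ht3 : ({γ, u, v} : Finset V) ∈ T)
    (hother : ∀ t ∈ T, t ≠ ({α, p, q} : Finset V) → t ≠ ({β, r, s} : Finset V) →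
      t ≠ ({γ, u, v} : Finset V) →
      ∀ x ∈ t, x ∉ ({α, β, γ, p, q, r, s, u, v} : Finset V)) :
    IsTrianglePacking G
      ((T \ {({α, p, q} : Finset V), ({β, r, s} : Finset V), ({γ, u, v} : Finset V)}) ∪
        {({α, β, γ} : Finset V), ({p, q, r} : Finset V), ({s, u, v} : Finset V)}) ∧
    ((T \ {({α, p, q} : Finset V), ({β, r, s} : Finset V), ({γ, u, v} : Finset V)}) ∪
        {({α, β, γ} : Finset V), ({p, q, r} : Finset V), ({s, u, v} : Finset V)}).card
      = T.card := by
  -- pairwise distinctness of the nine vertices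
  have hnd : ([α, β, γ, p, q, r, s, u, v] : List V).Nodup := by
    rw [← Multiset.coe_nodup, ← Multiset.toFinset_card_eq_card_iff_nodup]
    simpa using hdist
  simp only [List.nodup_cons, List.mem_cons, List.not_mem_nil, or_false, not_or,
    List.nodup_nil, and_true, List.mem_singleton] at hnd
  obtain ⟨⟨h12, h13, h14, h15, h16, h17, h18, h19⟩,
    ⟨h23, h24, h25, h26, h27, h28, h29⟩,
    ⟨h34, h35, h36, h37, h38, h39⟩,
    ⟨h45, h46, h47, h48, h49⟩,
    ⟨h56, h57, h58, h59⟩, ⟨h67, h68, h69⟩, ⟨h78, h79⟩, h89⟩ := hnd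
  set t1 : Finset V := {α, p, q} with ht1def
  set t2 : Finset V := {β, r, s} with ht2def
  set t3 : Finset V := {γ, u, v} with ht3def
  set n1 : Finset V := {α, β, γ} with hn1def
  set n2 : Finset V := {p, q, r} with hn2def
  set n3 : Finset V := {s, u, v} with hn3def
  set N9 : Finset V := {α, β, γ, p, q, r, s, u, v} with hN9def
  -- the new triangles are triangles
  have htriC : IsTriangle G n1 := by
    constructor
    · rw [hn1def, Finset.card_insert_of_notMem (by simp [h12, h13]),
        Finset.card_insert_of_notMem (by simp [h23]), Finset.card_singleton]
    · intro x hx y hy hxy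
      have hxC : x ∈ (C : Set V) := by
        rw [hn1def] at hx; simp only [Finset.mem_insert, Finset.mem_singleton] at hx
        rcases hx with rfl | rfl | rfl <;> simpa
      have hyC : y ∈ (C : Set V) := by
        rw [hn1def] at hy; simp only [Finset.mem_insert, Finset.mem_singleton] at hy
        rcases hy with rfl | rfl | rfl <;> simpa
      exact hC hxC hyC hxy
  have htriD : ∀ t : Finset V, t = n2 ∨ t = n3 → IsTriangle G t := by
    rintro t (rfl | rfl)
    · constructor
      · rw [hn2def, Finset.card_insert_of_notMem (by simp [h45, h46]),
          Finset.card_insert_of_notMem (by simp [h56]), Finset.card_singleton]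
      · intro x hx y hy hxy
        have hxD : x ∈ (D : Set V) := by
          rw [hn2def] at hx; simp only [Finset.mem_insert, Finset.mem_singleton] at hx
          rcases hx with rfl | rfl | rfl <;> simpa
        have hyD : y ∈ (D : Set V) := by
          rw [hn2def] at hy; simp only [Finset.mem_insert, Finset.mem_singleton] at hy
          rcases hy with rfl | rfl | rfl <;> simpa
        exact hD hxD hyD hxy
    · constructor
      · rw [hn3def, Finset.card_insert_of_notMem (by simp [h78, h79]),
          Finset.card_insert_of_notMem (by simp [h89]), Finset.card_singleton]
      · intro x hx y hy hxy
        have hxD : x ∈ (D : Set V) := by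
          rw [hn3def] at hx; simp only [Finset.mem_insert, Finset.mem_singleton] at hx
          rcases hx with rfl | rfl | rfl <;> simpa
        have hyD : y ∈ (D : Set V) := by
          rw [hn3def] at hy; simp only [Finset.mem_insert, Finset.mem_singleton] at hy
          rcases hy with rfl | rfl | rfl <;> simpa
        exact hD hxD hyD hxy
  -- the new triangles are contained in the nine-vertex set
  have hsub1 : n1 ⊆ N9 := by
    rw [hn1def, hN9def]; intro x hx
    simp only [Finset.mem_insert, Finset.mem_singleton] at hx ⊢
    rcases hx with rfl | rfl | rfl <;> simp
  have hsub2 : n2 ⊆ N9 := by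
    rw [hn2def, hN9def]; intro x hx
    simp only [Finset.mem_insert, Finset.mem_singleton] at hx ⊢
    rcases hx with rfl | rfl | rfl <;> simp
  have hsub3 : n3 ⊆ N9 := by
    rw [hn3def, hN9def]; intro x hx
    simp only [Finset.mem_insert, Finset.mem_singleton] at hx ⊢
    rcases hx with rfl | rfl | rfl <;> simp
  -- old surviving triangles are disjoint from N9
  have holdN9 : ∀ t ∈ T \ ({t1, t2, t3} : Finset (Finset V)), ∀ x ∈ t, x ∉ N9 := by
    intro t ht x hx
    rw [Finset.mem_sdiff] at ht
    simp only [Finset.mem_insert, Finset.mem_singleton, not_or] at ht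
    exact hother t ht.1 ht.2.1 ht.2.2.1 ht.2.2.2 x hx
  -- pairwise disjointness of the new triangles
  have hd12 : Disjoint n1 n2 := by
    rw [Finset.disjoint_left]
    intro a ha hb
    rw [hn1def] at ha; rw [hn2def] at hb
    simp only [Finset.mem_insert, Finset.mem_singleton] at ha hb
    rcases ha with rfl | rfl | rfl
    · rcases hb with h | h | h <;> [exact h14 h; exact h15 h; exact h16 h]
    · rcases hb with h | h | h <;> [exact h24 h; exact h25 h; exact h26 h]
    · rcases hb with h | h | h <;> [exact h34 h; exact h35 h; exact h36 h]
  have hd13 : Disjoint n1 n3 := by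
    rw [Finset.disjoint_left]
    intro a ha hb
    rw [hn1def] at ha; rw [hn3def] at hb
    simp only [Finset.mem_insert, Finset.mem_singleton] at ha hb
    rcases ha with rfl | rfl | rfl
    · rcases hb with h | h | h <;> [exact h17 h; exact h18 h; exact h19 h]
    · rcases hb with h | h | h <;> [exact h27 h; exact h28 h; exact h29 h]
    · rcases hb with h | h | h <;> [exact h37 h; exact h38 h; exact h39 h]
  have hd23 : Disjoint n2 n3 := by
    rw [Finset.disjoint_left]
    intro a ha hb
    rw [hn2def] at ha; rw [hn3def] at hb
    simp only [Finset.mem_insert, Finset.mem_singleton] at ha hb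
    rcases ha with rfl | rfl | rfl
    · rcases hb with h | h | h <;> [exact h47 h; exact h48 h; exact h49 h]
    · rcases hb with h | h | h <;> [exact h57 h; exact h58 h; exact h59 h]
    · rcases hb with h | h | h <;> [exact h67 h; exact h68 h; exact h69 h]
  -- membership of key vertices in new triangles
  have hα1 : α ∈ n1 := by rw [hn1def]; simp
  have hp2 : p ∈ n2 := by rw [hn2def]; simp
  have hs3 : s ∈ n3 := by rw [hn3def]; simp
  have hαN9 : α ∈ N9 := hsub1 hα1
  have hpN9 : p ∈ N9 := hsub2 hp2
  have hsN9 : s ∈ N9 := hsub3 hs3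
  -- new triangles are not in T \ {t1,t2,t3}
  have hnew_not_old : ∀ n : Finset V, n = n1 ∨ n = n2 ∨ n = n3 →
      n ∉ T \ ({t1, t2, t3} : Finset (Finset V)) := by
    rintro n hn hmem
    rcases hn with rfl | rfl | rfl
    · exact holdN9 _ hmem α hα1 hαN9
    · exact holdN9 _ hmem p hp2 hpN9
    · exact holdN9 _ hmem s hs3 hsN9
  -- disjointness between old and new triangles
  have hold_new : ∀ t ∈ T \ ({t1, t2, t3} : Finset (Finset V)),
      ∀ n : Finset V, n = n1 ∨ n = n2 ∨ n = n3 → Disjoint t n := by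
    intro t ht n hn
    rw [Finset.disjoint_left]
    intro a ha hna
    refine holdN9 t ht a ha ?_
    rcases hn with rfl | rfl | rfl
    · exact hsub1 hna
    · exact hsub2 hna
    · exact hsub3 hna
  refine ⟨⟨?_, ?_⟩, ?_⟩
  · -- all members are triangles
    intro t ht
    rw [Finset.mem_union] at ht
    rcases ht with ht | ht
    · exact hT.1 t (Finset.mem_sdiff.mp ht).1
    · simp only [Finset.mem_insert, Finset.mem_singleton] at ht
      rcases ht with rfl | rfl | rfl
      · exact htriC
      · exact htriD n2 (Or.inl rfl)
      · exact htriD n3 (Or.inr rfl)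
  · -- pairwise disjoint
    intro x hx y hy hxy
    simp only [Finset.coe_union, Set.mem_union, Finset.mem_coe, Finset.mem_insert,
      Finset.mem_singleton] at hx hy
    rcases hx with hx | hx
    · rcases hy with hy | hy
      · exact hT.2 (Finset.mem_coe.mpr (Finset.mem_sdiff.mp hx).1)
          (Finset.mem_coe.mpr (Finset.mem_sdiff.mp hy).1) hxy
      · exact hold_new x hx y hy
    · rcases hy with hy | hy
      · exact (hold_new y hy x hx).symm
      · rcases hx with rfl | rfl | rfl <;> rcases hy with rfl | rfl | rfl <;>
          first
          | exact absurd rfl hxy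
          | exact hd12
          | exact hd13
          | exact hd23
          | exact hd12.symm
          | exact hd13.symm
          | exact hd23.symm
  · -- cardinality
    have hne_t12 : t1 ≠ t2 := by
      intro h
      have : α ∈ t2 := h ▸ (by rw [ht1def]; simp)
      rw [ht2def] at this
      simp only [Finset.mem_insert, Finset.mem_singleton] at this
      rcases this with h' | h' | h' <;> [exact h12 h'; exact h16 h'; exact h17 h']
    have hne_t13 : t1 ≠ t3 := by
      intro h
      have : α ∈ t3 := h ▸ (by rw [ht1def]; simp)
      rw [ht3def] at this
      simp only [Finset.mem_insert, Finset.mem_singleton] at this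
      rcases this with h' | h' | h' <;> [exact h13 h'; exact h18 h'; exact h19 h']
    have hne_t23 : t2 ≠ t3 := by
      intro h
      have : β ∈ t3 := h ▸ (by rw [ht2def]; simp)
      rw [ht3def] at this
      simp only [Finset.mem_insert, Finset.mem_singleton] at this
      rcases this with h' | h' | h' <;> [exact h23 h'; exact h28 h'; exact h29 h']
    have hne_n12 : n1 ≠ n2 := by
      intro h; exact Finset.disjoint_left.mp hd12 hα1 (h ▸ hα1)
    have hne_n13 : n1 ≠ n3 := by
      intro h; exact Finset.disjoint_left.mp hd13 hα1 (h ▸ hα1)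
    have hne_n23 : n2 ≠ n3 := by
      intro h; exact Finset.disjoint_left.mp hd23 hp2 (h ▸ hp2)
    have hSsub : ({t1, t2, t3} : Finset (Finset V)) ⊆ T := by
      intro x hx
      simp only [Finset.mem_insert, Finset.mem_singleton] at hx
      rcases hx with rfl | rfl | rfl <;> assumption
    have hScard : ({t1, t2, t3} : Finset (Finset V)).card = 3 := by
      rw [Finset.card_insert_of_notMem (by simp [hne_t12, hne_t13]),
        Finset.card_insert_of_notMem (by simp [hne_t23]), Finset.card_singleton]
    have hNcard : ({n1, n2, n3} : Finset (Finset V)).card = 3 := by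
      rw [Finset.card_insert_of_notMem (by simp [hne_n12, hne_n13]),
        Finset.card_insert_of_notMem (by simp [hne_n23]), Finset.card_singleton]
    have hdisj : Disjoint (T \ ({t1, t2, t3} : Finset (Finset V)))
        ({n1, n2, n3} : Finset (Finset V)) := by
      rw [Finset.disjoint_left]
      intro x hx hxN
      simp only [Finset.mem_insert, Finset.mem_singleton] at hxN
      exact hnew_not_old x hxN hx
    rw [Finset.card_union_of_disjoint hdisj, hNcard,
      Finset.card_sdiff_of_subset hSsub, hScard]
    have : 3 ≤ T.card := hScard ▸ Finset.card_le_card hSsub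
    omega
end

section
/- Let C be a clique of a graph G and let T be a triangle packing containing triangles {α,p,q} and {β,r,s}, where α,β ∈ C and p,q,r,s are four distinct vertices each adjacent to both α and β and pairwise adjacent. Then replacing these two triangles with {α,β,p} and {q,r,s} yields a triangle packing of the same cardinality. -/
set_option maxHeartbeats 1000000 in
theorem swap_two_triangles_shared_clique {V : Type*} [DecidableEq V]
    (G : SimpleGraph V) (C : Finset V) (hC : G.IsClique (C : Set V))
    (T : Finset (Finset V)) (hT : IsTrianglePacking G T)
    (α β p q r s : V)
    (hαC : α ∈ C) (hβC : β ∈ C) (hαβ : α ≠ β)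
    (hdist : ({α, β, p, q, r, s} : Finset V).card = 6)
    (hpqrs : G.IsClique ({p, q, r, s} : Set V))
    (hadj : ∀ x ∈ ({p, q, r, s} : Finset V), G.Adj α x ∧ G.Adj β x)
    (ht1 : ({α, p, q} : Finset V) ∈ T)
    (ht2 : ({β, r, s} : Finset V) ∈ T)
    (hother : ∀ t ∈ T, t ≠ ({α, p, q} : Finset V) → t ≠ ({β, r, s} : Finset V) →
      ∀ x ∈ t, x ∉ ({α, β, p, q, r, s} : Finset V)) :
    IsTrianglePacking G
      ((T \ {({α, p, q} : Finset V), ({β, r, s} : Finset V)}) ∪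
        {({α, β, p} : Finset V), ({q, r, s} : Finset V)}) ∧
    ((T \ {({α, p, q} : Finset V), ({β, r, s} : Finset V)}) ∪
        {({α, β, p} : Finset V), ({q, r, s} : Finset V)}).card = T.card := by
  obtain ⟨hTtri, hTdisj⟩ := hT
  -- pairwise distinctness of the six vertices
  have hnd : ([α, β, p, q, r, s] : List V).Nodup := by
    have h1 : ([α, β, p, q, r, s] : List V).toFinset = {α, β, p, q, r, s} := by simp
    have h2 := List.card_toFinset ([α, β, p, q, r, s] : List V)
    rw [h1, hdist] at h2
    exact List.dedup_eq_self.mp ((List.dedup_sublist _).eq_of_length h2.symm)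
  simp only [List.nodup_cons, List.mem_cons, List.mem_singleton, List.not_mem_nil,
    or_false, not_or, List.nodup_nil, and_true] at hnd
  obtain ⟨⟨hαβ', hαp, hαq, hαr, hαs⟩, ⟨hβp, hβq, hβr, hβs⟩, ⟨hpq, hpr, hps⟩,
    ⟨hqr, hqs⟩, hrs, -⟩ := hnd
  -- adjacencies
  have aαβ : G.Adj α β := hC hαC hβC hαβ
  have aαp : G.Adj α p := (hadj p (by simp)).1
  have aβp : G.Adj β p := (hadj p (by simp)).2
  have aqr : G.Adj q r := hpqrs (by simp) (by simp) hqr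
  have aqs : G.Adj q s := hpqrs (by simp) (by simp) hqs
  have ars : G.Adj r s := hpqrs (by simp) (by simp) hrs
  have aβα := aαβ.symm
  have apα := aαp.symm
  have apβ := aβp.symm
  have arq := aqr.symm
  have asq := aqs.symm
  have asr := ars.symm
  -- new triangles
  have hn1tri : IsTriangle G ({α, β, p} : Finset V) := by
    constructor
    · exact Finset.card_eq_three.mpr ⟨α, β, p, hαβ, hαp, hβp, rfl⟩
    · intro x hx y hy hxy
      simp only [Finset.mem_insert, Finset.mem_singleton] at hx hy
      rcases hx with rfl | rfl | rfl <;> rcases hy with rfl | rfl | rfl <;>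
        first | exact absurd rfl hxy | assumption
  have hn2tri : IsTriangle G ({q, r, s} : Finset V) := by
    constructor
    · exact Finset.card_eq_three.mpr ⟨q, r, s, hqr, hqs, hrs, rfl⟩
    · intro x hx y hy hxy
      simp only [Finset.mem_insert, Finset.mem_singleton] at hx hy
      rcases hx with rfl | rfl | rfl <;> rcases hy with rfl | rfl | rfl <;>
        first | exact absurd rfl hxy | assumption
  -- the new triangles live inside the six-vertex set
  have hn1sub : ({α, β, p} : Finset V) ⊆ {α, β, p, q, r, s} := by
    intro x hx
    simp only [Finset.mem_insert, Finset.mem_singleton] at hx ⊢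
    rcases hx with rfl | rfl | rfl <;> simp
  have hn2sub : ({q, r, s} : Finset V) ⊆ {α, β, p, q, r, s} := by
    intro x hx
    simp only [Finset.mem_insert, Finset.mem_singleton] at hx ⊢
    rcases hx with rfl | rfl | rfl <;> simp
  -- inequalities between old and new triangles
  have hn1t1 : ({α, β, p} : Finset V) ≠ ({α, p, q} : Finset V) := by
    intro h
    have : β ∈ ({α, p, q} : Finset V) := h ▸ (by simp)
    simp only [Finset.mem_insert, Finset.mem_singleton] at this
    rcases this with h' | h' | h' <;> simp_all
  have hn1t2 : ({α, β, p} : Finset V) ≠ ({β, r, s} : Finset V) := by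
    intro h
    have : α ∈ ({β, r, s} : Finset V) := h ▸ (by simp)
    simp only [Finset.mem_insert, Finset.mem_singleton] at this
    rcases this with h' | h' | h' <;> simp_all
  have hn2t1 : ({q, r, s} : Finset V) ≠ ({α, p, q} : Finset V) := by
    intro h
    have : r ∈ ({α, p, q} : Finset V) := h ▸ (by simp)
    simp only [Finset.mem_insert, Finset.mem_singleton] at this
    rcases this with h' | h' | h' <;> simp_all
  have hn2t2 : ({q, r, s} : Finset V) ≠ ({β, r, s} : Finset V) := by
    intro h
    have : q ∈ ({β, r, s} : Finset V) := h ▸ (by simp)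
    simp only [Finset.mem_insert, Finset.mem_singleton] at this
    rcases this with h' | h' | h' <;> simp_all
  have hn1n2 : ({α, β, p} : Finset V) ≠ ({q, r, s} : Finset V) := by
    intro h
    have : α ∈ ({q, r, s} : Finset V) := h ▸ (by simp)
    simp only [Finset.mem_insert, Finset.mem_singleton] at this
    rcases this with h' | h' | h' <;> simp_all
  have ht1t2 : ({α, p, q} : Finset V) ≠ ({β, r, s} : Finset V) := by
    intro h
    have : α ∈ ({β, r, s} : Finset V) := h ▸ (by simp)
    simp only [Finset.mem_insert, Finset.mem_singleton] at this
    rcases this with h' | h' | h' <;> simp_all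
  -- new triangles are not in T
  have hn1T : ({α, β, p} : Finset V) ∉ T := fun h =>
    hother _ h hn1t1 hn1t2 α (by simp) (by simp)
  have hn2T : ({q, r, s} : Finset V) ∉ T := fun h =>
    hother _ h hn2t1 hn2t2 q (by simp) (by simp)
  -- disjointness of new triangles with each other
  have hdisj12 : Disjoint ({α, β, p} : Finset V) ({q, r, s} : Finset V) := by
    rw [Finset.disjoint_left]
    intro x hx hx'
    simp only [Finset.mem_insert, Finset.mem_singleton] at hx hx'
    rcases hx with rfl | rfl | rfl <;> rcases hx' with h | h | h <;> simp_all
  -- members of T \ {t1, t2} avoid the six vertices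
  have havoid : ∀ t ∈ T \ {({α, p, q} : Finset V), ({β, r, s} : Finset V)},
      ∀ x ∈ t, x ∉ ({α, β, p, q, r, s} : Finset V) := by
    intro t ht
    simp only [Finset.mem_sdiff, Finset.mem_insert, Finset.mem_singleton, not_or] at ht
    exact hother t ht.1 ht.2.1 ht.2.2
  have hdisjold : ∀ t ∈ T \ {({α, p, q} : Finset V), ({β, r, s} : Finset V)},
      Disjoint t ({α, β, p} : Finset V) ∧ Disjoint t ({q, r, s} : Finset V) := by
    intro t ht
    constructor <;> (rw [Finset.disjoint_left]; intro x hx hx')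
    · exact havoid t ht x hx (hn1sub hx')
    · exact havoid t ht x hx (hn2sub hx')
  refine ⟨⟨?_, ?_⟩, ?_⟩
  · -- all members are triangles
    intro t ht
    simp only [Finset.mem_union, Finset.mem_sdiff, Finset.mem_insert,
      Finset.mem_singleton] at ht
    rcases ht with ⟨htT, _⟩ | rfl | rfl
    · exact hTtri t htT
    · exact hn1tri
    · exact hn2tri
  · -- pairwise disjoint
    intro t ht u hu htu
    simp only [Finset.mem_coe, Finset.mem_union, Finset.mem_insert,
      Finset.mem_singleton] at ht hu
    have ht' := ht
    have hu' := hu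
    rcases ht' with ht' | rfl | rfl <;> rcases hu' with hu' | rfl | rfl
    · exact hTdisj (Finset.mem_sdiff.mp ht').1 (Finset.mem_sdiff.mp hu').1 htu
    · exact (hdisjold t ht').1
    · exact (hdisjold t ht').2
    · exact ((hdisjold u hu').1).symm
    · exact absurd rfl htu
    · exact hdisj12
    · exact ((hdisjold u hu').2).symm
    · exact hdisj12.symm
    · exact absurd rfl htu
  · -- cardinality
    have hsub : ({({α, p, q} : Finset V), ({β, r, s} : Finset V)} : Finset (Finset V)) ⊆ T := by
      intro t ht
      simp only [Finset.mem_insert, Finset.mem_singleton] at ht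
      rcases ht with rfl | rfl <;> assumption
    have hc2 : ({({α, p, q} : Finset V), ({β, r, s} : Finset V)} : Finset (Finset V)).card = 2 :=
      Finset.card_pair ht1t2
    have hcn2 : ({({α, β, p} : Finset V), ({q, r, s} : Finset V)} : Finset (Finset V)).card = 2 :=
      Finset.card_pair hn1n2
    have hdisjU : Disjoint (T \ {({α, p, q} : Finset V), ({β, r, s} : Finset V)})
        ({({α, β, p} : Finset V), ({q, r, s} : Finset V)} : Finset (Finset V)) := by
      rw [Finset.disjoint_right]
      intro t ht ht'
      simp only [Finset.mem_insert, Finset.mem_singleton] at ht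
      rcases ht with rfl | rfl
      · exact hn1T (Finset.mem_sdiff.mp ht').1
      · exact hn2T (Finset.mem_sdiff.mp ht').1
    rw [Finset.card_union_of_disjoint hdisjU, Finset.card_sdiff_of_subset hsub, hc2, hcn2]
    have h2T : 2 ≤ T.card := hc2 ▸ Finset.card_le_card hsub
    omega
end
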